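/- arXiv:1906.08518 — 2 statements merged into one kernel-verified Lean document; each statement's English description precedes it below -/
import Mathlib

section
/- Let S be a nonempty finite set of distinct points in ℂⁿ and let |S| denote its cardinality. Then the singular degree satisfies Ω(S) ≤ |S|^{1/n}. -/
open MvPolynomial Filter

/-- The iterated partial derivative `∂^α` acting on polynomials in `n` variables. -/
noncomputable def iterPDeriv (n : ℕ) (α : Fin n → ℕ) :
    Module.End ℂ (MvPolynomial (Fin n) ℂ) :=
  (List.finRange n).foldl
    (fun L i => ((MvPolynomial.pderiv i).toLinearMap ^ α i) * L) 1

/-- `ord(P,p) ≥ l`: all partial derivatives of `P` of total order `< l` vanish at `p`. -/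
def HasOrderAtLeast {n : ℕ} (P : MvPolynomial (Fin n) ℂ) (p : Fin n → ℂ) (l : ℕ) : Prop :=
  ∀ α : Fin n → ℕ, (∑ i, α i) < l → MvPolynomial.eval p (iterPDeriv n α P) = 0

/-- `Ω(S,l)`: minimal degree of a nonzero polynomial vanishing to order `≥ l` at each point of `S`. -/
noncomputable def Omega {n : ℕ} (S : Finset (Fin n → ℂ)) (l : ℕ) : ℕ :=
  sInf {d | ∃ P : MvPolynomial (Fin n) ℂ,
    P ≠ 0 ∧ (∀ p ∈ S, HasOrderAtLeast P p l) ∧ P.totalDegree = d}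


/-- The singular degree `Ω(S) := inf_{l ≥ 1} Ω(S,l)/l`. -/
noncomputable def singDeg {n : ℕ} (S : Finset (Fin n → ℂ)) : ℝ :=
  ⨅ l : ℕ+, (Omega S (l : ℕ) : ℝ) / (l : ℕ)

/-! Parameter count. Polynomials of degree `≤ d` in `n` variables form a space of dimension
`C(d+n, n)`, while vanishing to order `l+1` at a point imposes `C(l+n, n)` linear conditions, so
`Ω(S, l+1) ≤ d` as soon as `|S| C(l+n, n) < C(d+n, n)`. Both binomials are `mⁿ/n!` up to lower
order terms, so `d = ⌊|S|^{1/n} (l+n)⌋` works, and `Ω(S, l+1)/(l+1) ≤ |S|^{1/n} (l+n)/(l+1)`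
tends to `|S|^{1/n}`. -/

namespace Finsupp

open Finset

variable (σ : Type*) [Fintype σ] [DecidableEq σ]

noncomputable def degreeLE (D : ℕ) : Finset (σ →₀ ℕ) :=
  (range (D + 1)).biUnion fun j => univ.finsuppAntidiag j

variable {σ} in
theorem mem_degreeLE {D : ℕ} {s : σ →₀ ℕ} : s ∈ degreeLE σ D ↔ s.degree ≤ D := by
  simp [degreeLE, degree_eq_sum]

theorem card_degreeLE (D : ℕ) :
    #(degreeLE σ D) = (D + Fintype.card σ).choose (Fintype.card σ) := by
  rw [degreeLE, card_biUnion]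
  · simp_rw [card_finsuppAntidiag_nat_eq_multichoose, card_univ, Nat.sum_range_multichoose]
  · intro i _ j _ hij
    simp only [Function.onFun, disjoint_left, mem_finsuppAntidiag]
    rintro s ⟨rfl, -⟩ ⟨h, -⟩
    exact hij h

end Finsupp

theorem MvPolynomial.finrank_restrictTotalDegree (σ R : Type*) [Fintype σ] [CommRing R]
    [StrongRankCondition R] (D : ℕ) :
    Module.finrank R (restrictTotalDegree σ R D) =
      (D + Fintype.card σ).choose (Fintype.card σ) := by
  classical
  rw [restrictTotalDegree, Module.finrank_eq_nat_card_basis (basisRestrictSupport R _),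
    ← Finsupp.card_degreeLE, ← Nat.card_eq_finsetCard]
  congr 2
  ext s
  exact Finsupp.mem_degreeLE.symm

open Topology

section

variable {n : ℕ}

noncomputable def jet (S : Finset (Fin n → ℂ)) (l : ℕ) :
    MvPolynomial (Fin n) ℂ →ₗ[ℂ] (S × Finsupp.degreeLE (Fin n) l → ℂ) :=
  LinearMap.pi fun q => (aeval (q.1 : Fin n → ℂ)).toLinearMap ∘ₗ iterPDeriv n q.2.1

theorem hasOrderAtLeast_of_mem_ker_jet {S : Finset (Fin n → ℂ)} {l : ℕ}
    {P : MvPolynomial (Fin n) ℂ} (hP : P ∈ LinearMap.ker (jet S l)) {p : Fin n → ℂ}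
    (hp : p ∈ S) : HasOrderAtLeast P p (l + 1) := by
  intro α hα
  have hαl : Finsupp.equivFunOnFinite.symm α ∈ Finsupp.degreeLE (Fin n) l := by
    rw [Finsupp.mem_degreeLE, Finsupp.degree_eq_sum]
    simpa [Nat.lt_succ_iff] using hα
  simpa [jet] using congrFun hP (⟨p, hp⟩, ⟨_, hαl⟩)

theorem exists_ne_zero_hasOrderAtLeast_totalDegree_le (S : Finset (Fin n → ℂ)) {l d : ℕ}
    (h : S.card * (l + n).choose n < (d + n).choose n) :
    ∃ P : MvPolynomial (Fin n) ℂ, P ≠ 0 ∧ (∀ p ∈ S, HasOrderAtLeast P p (l + 1)) ∧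
      P.totalDegree ≤ d := by
  have hker : LinearMap.ker ((jet S l).domRestrict (restrictTotalDegree (Fin n) ℂ d)) ≠ ⊥ := by
    apply LinearMap.ker_ne_bot_of_finrank_lt
    simpa [Module.finrank_fintype_fun_eq_card, finrank_restrictTotalDegree,
      Finsupp.card_degreeLE] using h
  obtain ⟨⟨P, hPd⟩, hP, hP0⟩ := (Submodule.ne_bot_iff _).1 hker
  refine ⟨P, fun h0 => hP0 (by simp [h0]), fun p hp => hasOrderAtLeast_of_mem_ker_jet ?_ hp,
    (mem_restrictTotalDegree _ _ _).1 hPd⟩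
  simpa using hP

theorem Omega_succ_le {S : Finset (Fin n → ℂ)} {l d : ℕ}
    (h : S.card * (l + n).choose n < (d + n).choose n) : Omega S (l + 1) ≤ d := by
  obtain ⟨P, hP0, hord, hdeg⟩ := exists_ne_zero_hasOrderAtLeast_totalDegree_le S h
  exact le_trans (Nat.sInf_le ⟨P, hP0, hord, rfl⟩) hdeg

open Nat in
theorem Omega_succ_le_of_mul_pow_lt {S : Finset (Fin n → ℂ)} {l d : ℕ}
    (h : (S.card : ℝ) * (l + n) ^ n < (d + 1) ^ n) : Omega S (l + 1) ≤ d := by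
  apply Omega_succ_le
  have h_choose_le := Nat.choose_le_pow_div (α := ℝ) n (l + n)
  have h_le_choose := Nat.pow_le_choose (α := ℝ) n (d + n)
  rw [show d + n + 1 - n = d + 1 by omega] at h_le_choose
  exact_mod_cast calc
    (S.card : ℝ) * (l + n).choose n ≤ S.card * ((l + n : ℕ) ^ n / n !) := by gcongr
    _ < (d + 1 : ℕ) ^ n / n ! := by rw [← mul_div_assoc]; gcongr; exact_mod_cast h
    _ ≤ (d + n).choose n := h_le_choose

theorem Omega_succ_le_rpow_mul (hn : 0 < n) (S : Finset (Fin n → ℂ)) (l : ℕ) :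
    (Omega S (l + 1) : ℝ) ≤ (S.card : ℝ) ^ (n : ℝ)⁻¹ * (l + n) := by
  set c := (S.card : ℝ) ^ (n : ℝ)⁻¹
  have hc : c ^ n = S.card := Real.rpow_inv_natCast_pow (by positivity) hn.ne'
  have hlt : (S.card : ℝ) * (l + n) ^ n < (⌊c * (l + n)⌋₊ + 1) ^ n := by
    rw [← hc, ← mul_pow]
    gcongr
    exact Nat.lt_floor_add_one _
  calc (Omega S (l + 1) : ℝ) ≤ ⌊c * (l + n)⌋₊ := by exact_mod_cast Omega_succ_le_of_mul_pow_lt hlt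
    _ ≤ c * (l + n) := Nat.floor_le (by positivity)

theorem singDeg_le_Omega_div (S : Finset (Fin n → ℂ)) (l : ℕ+) :
    singDeg S ≤ Omega S l / (l : ℕ) :=
  ciInf_le (f := fun l : ℕ+ => (Omega S l : ℝ) / (l : ℕ))
    ⟨0, Set.forall_mem_range.2 fun _ => by positivity⟩ l

end

theorem singDeg_le_card_rpow_general {n : ℕ} (hn : 0 < n) (S : Finset (Fin n → ℂ)) :
    singDeg S ≤ (S.card : ℝ) ^ ((n : ℝ)⁻¹) := by
  set c := (S.card : ℝ) ^ ((n : ℝ)⁻¹)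
  have hbound (l : ℕ) : singDeg S ≤ c + c * n * (1 / ((l : ℝ) + 1)) := calc
    singDeg S ≤ Omega S (l + 1) / (l + 1 : ℕ) := singDeg_le_Omega_div S l.succPNat
    _ ≤ c * (l + n) / (l + 1) := by push_cast; gcongr; exact Omega_succ_le_rpow_mul hn S l
    _ ≤ c + c * n * (1 / ((l : ℝ) + 1)) := by
      have : 0 ≤ c := by positivity
      rw [div_le_iff₀ (by positivity)]
      field_simp
      nlinarith
  have hlim : Tendsto (fun l : ℕ => c + c * n * (1 / ((l : ℝ) + 1))) atTop (𝓝 c) := by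
    simpa using tendsto_const_nhds.add (tendsto_one_div_add_atTop_nhds_zero_nat.const_mul (c * n))
  exact ge_of_tendsto' hlim hbound

theorem singDeg_le_card_rpow {n : ℕ} (hn : 0 < n) (S : Finset (Fin n → ℂ)) (hS : S.Nonempty) :
    singDeg S ≤ (S.card : ℝ) ^ ((n : ℝ)⁻¹) :=
  singDeg_le_card_rpow_general hn S
end

section
/- (Évain) For every n ≥ 1 and every positive integer m there exists a set S of mⁿ distinct points in ℂⁿ whose singular degree satisfies Ω(S) = m. -/
open MvPolynomial Filter

/-!
The grid `A ^ n` with `#A = m` works. The polynomial `(∏_{a ∈ A} (z₀ - a)) ^ l` vanishes to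
order `l` on it and has degree `l * m`. Conversely, moving a grid point `p` to the origin,
`ord(P, p) ≥ l` says that `P(z + p)` lies in `𝔪 ^ l`, `𝔪 = (z₁, …, zₙ)`. Let `P ≠ 0` have this
property at every grid point, and induct on `l` and on the variables of `P`. Either `P` vanishes
on each hyperplane `zᵢ = a`, `a ∈ A`; then `P = ∏_{a ∈ A} (zᵢ - a) * B`, and `B` vanishes to
order `l - 1` on the grid because each factor vanishes simply on its own hyperplane and is a unit
at the other grid points (`𝔪 ^ l` is `𝔪`-primary). Or the restriction of `P` to one of these
hyperplanes is nonzero, of no larger degree, involves fewer variables and still vanishes to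
order `l` on the grid. Hence `deg P ≥ l * m`, so `Ω(A ^ n, l) = l * m` for every `l`.
-/

namespace MvPolynomial

section CommSemiring

variable {σ R : Type*} [CommSemiring R]

theorem mem_idealOfVars_iff (P : MvPolynomial σ R) :
    P ∈ idealOfVars σ R ↔ constantCoeff P = 0 := by
  rw [← pow_one (idealOfVars σ R), mem_pow_idealOfVars_iff']
  simp [Finsupp.degree_eq_zero_iff, constantCoeff_eq]

theorem mem_pow_idealOfVars_of_X_mul_mem {i : σ} {Q : MvPolynomial σ R} {l : ℕ}
    (h : X i * Q ∈ idealOfVars σ R ^ (l + 1)) : Q ∈ idealOfVars σ R ^ l := by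
  rw [mem_pow_idealOfVars_iff'] at h ⊢
  intro x hx
  rw [← coeff_X_mul x i]
  exact h _ (by rw [map_add, Finsupp.degree_single]; omega)

noncomputable def taylor (p : σ → R) : MvPolynomial σ R →ₐ[R] MvPolynomial σ R :=
  aeval fun i => X i + C (p i)

@[simp]
theorem taylor_X (p : σ → R) (i : σ) : taylor p (X i) = X i + C (p i) :=
  aeval_X _ _

@[simp]
theorem taylor_C (p : σ → R) (a : R) : taylor p (C a) = C a :=
  aeval_C _ _

theorem constantCoeff_taylor (p : σ → R) (P : MvPolynomial σ R) :
    constantCoeff (taylor p P) = eval p P := by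
  induction P using MvPolynomial.induction_on <;> simp_all

theorem pderiv_taylor (i : σ) (p : σ → R) (P : MvPolynomial σ R) :
    pderiv i (taylor p P) = taylor p (pderiv i P) := by
  classical
  induction P using MvPolynomial.induction_on with
  | C a => simp
  | add f g hf hg => simp [hf, hg]
  | mul_X f j hf =>
    simp only [map_mul, pderiv_mul, hf, map_add, taylor_X, pderiv_X, pderiv_C, add_zero]
    congr 2
    rcases eq_or_ne i j with rfl | hij
    · simp
    · simp [hij.symm]

theorem coeff_pderiv_pow_apply (i : σ) (k : ℕ) (d : σ →₀ ℕ) (Q : MvPolynomial σ R) :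
    coeff d (((pderiv i).toLinearMap ^ k) Q) =
      coeff (d + Finsupp.single i k) Q * (d i + k).descFactorial k := by
  induction k generalizing Q with
  | zero => simp
  | succ k ih =>
    rw [pow_succ, Module.End.mul_apply, ih, Derivation.coeFn_coe, coeff_pderiv, add_assoc,
      ← Finsupp.single_add, Finsupp.add_apply, Finsupp.single_eq_same, mul_assoc,
      ← add_assoc, Nat.succ_descFactorial_succ]
    push_cast
    ring

theorem coeff_list_prod_pderiv_pow_apply [DecidableEq σ] (α : σ → ℕ) {l : List σ}
    (hl : l.Nodup) (d : σ →₀ ℕ) (Q : MvPolynomial σ R) :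
    coeff d ((l.map fun i => (pderiv i).toLinearMap ^ α i).prod Q) =
      coeff (d + ∑ i ∈ l.toFinset, Finsupp.single i (α i)) Q *
        ∏ i ∈ l.toFinset, ((d i + α i).descFactorial (α i) : R) := by
  induction l generalizing d with
  | nil => simp
  | cons i t ih =>
    obtain ⟨hit, ht⟩ := List.nodup_cons.1 hl
    have hit' : i ∉ t.toFinset := by simpa using hit
    rw [List.map_cons, List.prod_cons, Module.End.mul_apply, coeff_pderiv_pow_apply, ih ht,
      List.toFinset_cons, Finset.sum_insert hit', Finset.prod_insert hit', add_assoc, mul_assoc]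
    have hd : ∀ j ∈ t.toFinset, (d + Finsupp.single i (α i)) j = d j := fun j hj => by
      rw [Finsupp.add_apply, Finsupp.single_eq_of_ne (by rintro rfl; exact hit' hj), add_zero]
    rw [Finset.prod_congr rfl (g := fun j => ((d j + α j).descFactorial (α j) : R))
      fun j hj => by rw [hd j hj]]
    ring

theorem totalDegree_aeval_le {τ : Type*} {f : σ → MvPolynomial τ R}
    (hf : ∀ i, (f i).totalDegree ≤ 1) (P : MvPolynomial σ R) :
    (aeval f P).totalDegree ≤ P.totalDegree := by
  conv_lhs => rw [P.as_sum, map_sum]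
  refine totalDegree_finsetSum_le fun d hd => ?_
  rw [aeval_monomial, Finsupp.prod]
  calc _ ≤ (algebraMap R (MvPolynomial τ R) (coeff d P)).totalDegree
        + (∏ i ∈ d.support, f i ^ d i).totalDegree := totalDegree_mul _ _
    _ ≤ ∑ i ∈ d.support, d i := by
      rw [algebraMap_eq, totalDegree_C, zero_add]
      refine (totalDegree_finsetProd _ _).trans (Finset.sum_le_sum fun i _ => ?_)
      exact (totalDegree_pow _ _).trans (by simpa using Nat.mul_le_mul_left (d i) (hf i))
    _ ≤ P.totalDegree := le_totalDegree hd

section substVar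

variable [DecidableEq σ]

noncomputable def substVar (i : σ) (a : R) : MvPolynomial σ R →ₐ[R] MvPolynomial σ R :=
  aeval (Function.update X i (C a))

theorem vars_substVar_subset (i : σ) (a : R) (P : MvPolynomial σ R) :
    (substVar i a P).vars ⊆ P.vars.erase i := by
  rw [substVar, aeval_eq_bind₁]
  refine (vars_bind₁ _ _).trans fun j hj => ?_
  simp only [Finset.mem_biUnion] at hj
  obtain ⟨k, hk, hjk⟩ := hj
  rcases eq_or_ne k i with rfl | hki
  · simp at hjk
  · rw [Function.update_of_ne hki] at hjk
    rw [vars_def, Multiset.mem_toFinset] at hjk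
    obtain rfl : j = k := by simpa using Multiset.mem_of_le (degrees_X' k) hjk
    exact Finset.mem_erase.2 ⟨hki, hk⟩

theorem totalDegree_substVar_le (i : σ) (a : R) (P : MvPolynomial σ R) :
    (substVar i a P).totalDegree ≤ P.totalDegree := by
  refine totalDegree_aeval_le (fun j => ?_) P
  rcases eq_or_ne j i with rfl | hji
  · simp
  · rw [Function.update_of_ne hji, X]
    exact (totalDegree_monomial_le _ _).trans (by simp)

theorem taylor_substVar (q : σ → R) (i : σ) (a : R) (P : MvPolynomial σ R) :
    taylor q (substVar i a P) = substVar i 0 (taylor (Function.update q i a) P) := by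
  have : (taylor q).comp (substVar i a) = (substVar i 0).comp (taylor (Function.update q i a)) := by
    refine algHom_ext fun j => ?_
    rcases eq_or_ne j i with rfl | hji
    · simp [substVar]
    · simp [substVar, Function.update_of_ne hji]
  exact DFunLike.congr_fun this P

theorem substVar_zero_mem_pow_idealOfVars (i : σ) {Q : MvPolynomial σ R} {l : ℕ}
    (hQ : Q ∈ idealOfVars σ R ^ l) : substVar i 0 Q ∈ idealOfVars σ R ^ l := by
  have hle : (idealOfVars σ R).map (substVar i (0 : R)) ≤ idealOfVars σ R := by
    rw [Ideal.map_span, Ideal.span_le]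
    rintro _ ⟨_, ⟨j, rfl⟩, rfl⟩
    rcases eq_or_ne j i with rfl | hji
    · simp [substVar]
    · simpa [substVar, Function.update_of_ne hji] using Ideal.subset_span (Set.mem_range_self j)
  have := Ideal.mem_map_of_mem (substVar i (0 : R)) hQ
  rw [Ideal.map_pow] at this
  exact Ideal.pow_right_mono hle l this

end substVar

end CommSemiring

section CommRing

variable {σ R : Type*} [CommRing R]

theorem X_sub_C_dvd_sub_substVar [DecidableEq σ] (i : σ) (a : R) (P : MvPolynomial σ R) :
    X i - C a ∣ P - substVar i a P := by
  rw [← Ideal.mem_span_singleton, ← Ideal.Quotient.eq]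
  let π := Ideal.Quotient.mkₐ R (Ideal.span {X i - C a})
  have : π = π.comp (substVar i a) := by
    refine algHom_ext fun j => ?_
    rcases eq_or_ne j i with rfl | hji
    · simp [substVar, π, Ideal.Quotient.mkₐ_eq_mk, Ideal.Quotient.eq]
    · simp [substVar, Function.update_of_ne hji]
  exact DFunLike.congr_fun this P

theorem isCoprime_X_sub_C {i : σ} {a b : R} (h : IsUnit (a - b)) :
    IsCoprime (X i - C a : MvPolynomial σ R) (X i - C b) := by
  obtain ⟨u, hu⟩ := h
  refine ⟨-C ↑u⁻¹, C ↑u⁻¹, ?_⟩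
  have : (C (↑u⁻¹ : R) * (C a - C b) : MvPolynomial σ R) = 1 := by
    rw [← C_sub, ← C_mul, ← hu, Units.inv_mul, C_1]
  linear_combination this

theorem totalDegree_X_sub_C [Nontrivial R] (i : σ) (a : R) : (X i - C a).totalDegree = 1 := by
  rw [sub_eq_add_neg, ← C_neg, totalDegree_add_eq_left_of_totalDegree_lt, totalDegree_X]
  simp [totalDegree_X]

theorem X_sub_C_ne_zero [Nontrivial R] (i : σ) (a : R) : (X i - C a : MvPolynomial σ R) ≠ 0 :=
  fun h => by simpa [h] using totalDegree_X_sub_C (σ := σ) i a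

theorem totalDegree_prod_X_sub_C [IsDomain R] (i : σ) (A : Finset R) :
    (∏ a ∈ A, (X i - C a)).totalDegree = A.card := by
  classical
  induction A using Finset.induction_on with
  | empty => simp
  | insert a A ha ih =>
    rw [Finset.prod_insert ha, totalDegree_mul_of_isDomain (X_sub_C_ne_zero i a)
      (Finset.prod_ne_zero_iff.2 fun b _ => X_sub_C_ne_zero i b), totalDegree_X_sub_C, ih,
      Finset.card_insert_of_notMem ha, add_comm]

end CommRing

section Field

variable {σ K : Type*} [Field K]

theorem isMaximal_idealOfVars : (idealOfVars σ K).IsMaximal := by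
  have : idealOfVars σ K = RingHom.ker (constantCoeff : MvPolynomial σ K →+* K) := by
    ext P; rw [mem_idealOfVars_iff, RingHom.mem_ker]
  rw [this]
  exact RingHom.ker_isMaximal_of_surjective _ fun a => ⟨C a, constantCoeff_C σ a⟩

theorem mem_pow_idealOfVars_of_mul_mem {U Q : MvPolynomial σ K} {l : ℕ}
    (hU : constantCoeff U ≠ 0) (h : U * Q ∈ idealOfVars σ K ^ l) :
    Q ∈ idealOfVars σ K ^ l := by
  rcases Nat.eq_zero_or_pos l with rfl | hl
  · simp
  have hrad : (idealOfVars σ K ^ l).radical = idealOfVars σ K := by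
    rw [Ideal.radical_pow _ hl.ne', isMaximal_idealOfVars.isPrime.radical]
  have hprim := Ideal.isPrimary_of_isMaximal_radical (hrad ▸ isMaximal_idealOfVars)
  rw [mul_comm] at h
  refine ((Ideal.isPrimary_iff.1 hprim).2 h).resolve_right ?_
  rwa [hrad, mem_idealOfVars_iff]

theorem taylor_prod_X_sub_C {i : σ} {A : Finset K} {p : σ → K} (hp : p i ∈ A) :
    ∃ U, constantCoeff U ≠ 0 ∧ taylor p (∏ a ∈ A, (X i - C a)) = X i * U := by
  classical
  refine ⟨∏ a ∈ A.erase (p i), (X i + C (p i - a)), ?_, ?_⟩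
  · simp only [map_prod, map_add, constantCoeff_X, constantCoeff_C, zero_add]
    exact Finset.prod_ne_zero_iff.2 fun a ha => sub_ne_zero.2 (Finset.ne_of_mem_erase ha).symm
  · have : ∀ a, taylor p (X i - C a) = X i + C (p i - a) := fun a => by
      rw [map_sub, taylor_X, taylor_C, C_sub]; ring
    simp only [map_prod, this]
    rw [← Finset.mul_prod_erase A _ hp, sub_self, C_0, add_zero]

theorem prod_X_sub_C_dvd [DecidableEq σ] {i : σ} {A : Finset K} {P : MvPolynomial σ K}
    (h : ∀ a ∈ A, substVar i a P = 0) : ∏ a ∈ A, (X i - C a) ∣ P := by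
  refine Finset.prod_dvd_of_coprime (fun a _ b _ hab => ?_) fun a ha => ?_
  · exact isCoprime_X_sub_C (sub_ne_zero.2 hab).isUnit
  · simpa [h a ha] using X_sub_C_dvd_sub_substVar i a P

def VanishesOnGrid (A : Finset K) (l : ℕ) (P : MvPolynomial σ K) : Prop :=
  ∀ p : σ → K, (∀ i, p i ∈ A) → taylor p P ∈ idealOfVars σ K ^ l

variable {A : Finset K} {l : ℕ}

namespace VanishesOnGrid

theorem prod_X_sub_C_pow (i : σ) : VanishesOnGrid A l ((∏ a ∈ A, (X i - C a)) ^ l) := by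
  intro p hp
  obtain ⟨U, -, hU⟩ := taylor_prod_X_sub_C (hp i)
  rw [map_pow, hU]
  exact Ideal.pow_mem_pow (Ideal.mul_mem_right _ _ (Ideal.subset_span (Set.mem_range_self i))) l

theorem of_prod_X_sub_C_mul {i : σ} {B : MvPolynomial σ K}
    (h : VanishesOnGrid A (l + 1) ((∏ a ∈ A, (X i - C a)) * B)) : VanishesOnGrid A l B := by
  intro p hp
  obtain ⟨U, hU, hf⟩ := taylor_prod_X_sub_C (hp i)
  have := h p hp
  rw [map_mul, hf, mul_assoc] at this
  exact mem_pow_idealOfVars_of_mul_mem hU (mem_pow_idealOfVars_of_X_mul_mem this)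

theorem substVar [DecidableEq σ] {P : MvPolynomial σ K} (h : VanishesOnGrid A l P) (i : σ)
    {a : K} (ha : a ∈ A) : VanishesOnGrid A l (substVar i a P) := by
  intro q hq
  rw [taylor_substVar]
  refine substVar_zero_mem_pow_idealOfVars i (h _ fun j => ?_)
  rcases eq_or_ne j i with rfl | hji
  · simpa
  · simpa [Function.update_of_ne hji] using hq j

theorem eq_zero_of_C {c : K} (h : VanishesOnGrid A (l + 1) (C c : MvPolynomial σ K))
    (hA : A.Nonempty) : c = 0 := by
  obtain ⟨a, ha⟩ := hA
  simpa [C_mem_pow_idealOfVars_iff] using h (fun _ => a) fun _ => ha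

end VanishesOnGrid

theorem succ_mul_card_le_totalDegree_of_vars_subset
    (ih : ∀ B : MvPolynomial σ K, B ≠ 0 → VanishesOnGrid A l B → l * A.card ≤ B.totalDegree)
    (s : Finset σ) (P : MvPolynomial σ K) (hP : P ≠ 0) (hvars : P.vars ⊆ s)
    (h : VanishesOnGrid A (l + 1) P) : (l + 1) * A.card ≤ P.totalDegree := by
  classical
  induction s using Finset.induction_on generalizing P with
  | empty =>
    rcases A.eq_empty_or_nonempty with rfl | hA
    · simp
    rw [vars_eq_empty_iff_eq_C.1 (Finset.subset_empty.1 hvars)] at h hP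
    exact absurd (by rw [VanishesOnGrid.eq_zero_of_C h hA, C_0]) hP
  | insert i s _ ihs =>
    by_cases hsub : ∀ a ∈ A, substVar i a P = 0
    · obtain ⟨B, rfl⟩ := prod_X_sub_C_dvd hsub
      have hB : B ≠ 0 := right_ne_zero_of_mul hP
      rw [totalDegree_mul_of_isDomain (left_ne_zero_of_mul hP) hB, totalDegree_prod_X_sub_C]
      have := ih B hB h.of_prod_X_sub_C_mul
      linarith
    · push Not at hsub
      obtain ⟨a, ha, hQ⟩ := hsub
      refine (ihs _ hQ ?_ (h.substVar i ha)).trans (totalDegree_substVar_le i a P)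
      exact (vars_substVar_subset i a P).trans
        ((Finset.erase_subset_erase i hvars).trans (Finset.erase_insert_subset i s))

theorem mul_card_le_totalDegree {P : MvPolynomial σ K} (hP : P ≠ 0) (h : VanishesOnGrid A l P) :
    l * A.card ≤ P.totalDegree := by
  induction l generalizing P with
  | zero => simp
  | succ l ih =>
    exact succ_mul_card_le_totalDegree_of_vars_subset (fun B hB => ih hB) _ P hP subset_rfl h

end Field

end MvPolynomial

section iterPDeriv

variable {n : ℕ}

theorem iterPDeriv_eq_list_prod (α : Fin n → ℕ) :
    iterPDeriv n α =
      ((List.finRange n).reverse.map fun i => (pderiv i).toLinearMap ^ α i).prod := by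
  rw [iterPDeriv, List.foldl_eq_foldr_reverse, List.prod_eq_foldr, List.foldr_map]

theorem iterPDeriv_taylor (α : Fin n → ℕ) (p : Fin n → ℂ) (P : MvPolynomial (Fin n) ℂ) :
    iterPDeriv n α (taylor p P) = taylor p (iterPDeriv n α P) := by
  have hcomm : Commute (iterPDeriv n α) (taylor p).toLinearMap := by
    rw [iterPDeriv_eq_list_prod]
    refine Commute.list_prod_left _ _ fun D hD => ?_
    obtain ⟨i, -, rfl⟩ := List.mem_map.1 hD
    exact Commute.pow_left (LinearMap.ext (pderiv_taylor i p)) _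
  exact LinearMap.congr_fun hcomm.eq P

theorem constantCoeff_iterPDeriv (α : Fin n → ℕ) (Q : MvPolynomial (Fin n) ℂ) :
    constantCoeff (iterPDeriv n α Q) =
      coeff (Finsupp.equivFunOnFinite.symm α) Q * ∏ i, ((α i).factorial : ℂ) := by
  classical
  rw [iterPDeriv_eq_list_prod, constantCoeff_eq,
    coeff_list_prod_pderiv_pow_apply _ (List.nodup_reverse.2 (List.nodup_finRange n)),
    List.toFinset_reverse, List.toFinset_finRange, Finsupp.equivFunOnFinite_symm_eq_sum]
  simp [Nat.descFactorial_self]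

theorem hasOrderAtLeast_iff_taylor_mem (P : MvPolynomial (Fin n) ℂ) (p : Fin n → ℂ) (l : ℕ) :
    HasOrderAtLeast P p l ↔ taylor p P ∈ idealOfVars (Fin n) ℂ ^ l := by
  have key : ∀ α, eval p (iterPDeriv n α P) =
      coeff (Finsupp.equivFunOnFinite.symm α) (taylor p P) * ∏ i, ((α i).factorial : ℂ) :=
    fun α => by rw [← constantCoeff_taylor, ← iterPDeriv_taylor, constantCoeff_iterPDeriv]
  simp only [HasOrderAtLeast, key, mem_pow_idealOfVars_iff', mul_eq_zero, Finset.prod_eq_zero_iff,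
    Nat.cast_eq_zero, Nat.factorial_ne_zero, and_false, exists_false, or_false]
  constructor
  · intro h x hx
    simpa using h x (by rwa [Finsupp.degree_eq_sum] at hx)
  · intro h α hα
    exact h _ (by simpa [Finsupp.degree_eq_sum] using hα)

end iterPDeriv

theorem Omega_piFinset {n : ℕ} (hn : 0 < n) (A : Finset ℂ) (l : ℕ) :
    Omega (Fintype.piFinset fun _ : Fin n => A) l = l * A.card := by
  have hgrid : ∀ P : MvPolynomial (Fin n) ℂ,
      (∀ p ∈ Fintype.piFinset fun _ => A, HasOrderAtLeast P p l) ↔ VanishesOnGrid A l P := by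
    simp [VanishesOnGrid, hasOrderAtLeast_iff_taylor_mem]
  set f : MvPolynomial (Fin n) ℂ := ∏ a ∈ A, (X ⟨0, hn⟩ - C a)
  have hf : f ^ l ≠ 0 := pow_ne_zero _ (Finset.prod_ne_zero_iff.2 fun a _ => X_sub_C_ne_zero _ a)
  have hford := (hgrid (f ^ l)).2 (.prod_X_sub_C_pow _)
  rw [Omega]
  refine le_antisymm (le_trans (Nat.sInf_le ⟨f ^ l, hf, hford, rfl⟩) ?_)
    (le_csInf ⟨_, f ^ l, hf, hford, rfl⟩ ?_)
  · exact (totalDegree_pow _ _).trans (by rw [totalDegree_prod_X_sub_C])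
  · rintro _ ⟨P, hP, hord, rfl⟩
    exact mul_card_le_totalDegree hP ((hgrid P).1 hord)

theorem evain_existence_general {n : ℕ} (hn : 0 < n) (m : ℕ) :
    ∃ S : Finset (Fin n → ℂ), S.card = m ^ n ∧ singDeg S = (m : ℝ) := by
  set A : Finset ℂ := (Finset.range m).image (Nat.cast : ℕ → ℂ)
  have hA : A.card = m := by
    rw [Finset.card_image_of_injective _ Nat.cast_injective, Finset.card_range]
  refine ⟨Fintype.piFinset fun _ => A, by simp [hA], ?_⟩
  have : ∀ l : ℕ+, (Omega (Fintype.piFinset fun _ : Fin n => A) l : ℝ) / (l : ℕ) = m := by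
    intro l
    rw [Omega_piFinset hn, hA, Nat.cast_mul, mul_div_cancel_left₀ _ (by positivity)]
  simp only [singDeg, this, ciInf_const]

theorem evain_existence {n : ℕ} (hn : 0 < n) (m : ℕ) (hm : 0 < m) :
    ∃ S : Finset (Fin n → ℂ), S.card = m ^ n ∧ singDeg S = (m : ℝ) :=
  evain_existence_general hn m
end
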